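/- arXiv:2012.13698 — 5 statements merged into one kernel-verified Lean document; each statement's English description precedes it below -/
import Mathlib

section
/- In the Shannon-Fano-Elias construction, the codewords are prefix-free: for keys i ≠ j, truncating the binary expansion of F̄(i) = F(i-1) + p_i/2 to ℓ_i = ⌈log₂(1/p_i)⌉ + 1 bits yields a bit string that is not a prefix of the truncation of F̄(j) to ℓ_j bits, where F is the CDF of the distribution. -/
/-- Halving a real halves its floor (integer division). -/
lemma sfe_floor_half (x : ℝ) : ⌊x / 2⌋ = ⌊x⌋ / 2 := by
  have h1 : (⌊x⌋ : ℝ) ≤ x := Int.floor_le x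
  have h2 : x < ⌊x⌋ + 1 := Int.lt_floor_add_one x
  have hq : 2 * (⌊x⌋ / 2) + ⌊x⌋ % 2 = ⌊x⌋ := Int.mul_ediv_add_emod ⌊x⌋ 2
  have hr0 : 0 ≤ ⌊x⌋ % 2 := Int.emod_nonneg _ (by norm_num)
  have hr1 : ⌊x⌋ % 2 ≤ 1 := by omega
  have hcast : 2 * ((⌊x⌋ / 2 : ℤ) : ℝ) + ((⌊x⌋ % 2 : ℤ) : ℝ) = (⌊x⌋ : ℝ) := by
    exact_mod_cast congrArg (fun z : ℤ => (z : ℝ)) hq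
  rw [Int.floor_eq_iff]
  have hr0' : (0:ℝ) ≤ ((⌊x⌋ % 2 : ℤ) : ℝ) := by exact_mod_cast hr0
  have hr1' : ((⌊x⌋ % 2 : ℤ) : ℝ) ≤ 1 := by exact_mod_cast hr1
  constructor
  · linarith
  · linarith

/-- Shannon-Fano-Elias codewords are prefix-free.  The `k`-th bit (for
    `1 ≤ k`) of the binary expansion of `x ∈ [0,1)` is `⌊x * 2^k⌋ % 2`; the
    codeword of key `i` consists of the bits `k = 1, …, ℓ i` of
    `F̄ i = ∑_{j < i} p j + p i / 2`, where `ℓ i = ⌈log₂ (1 / p i)⌉ + 1`. -/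
theorem sfe_prefix_free (n : ℕ) (p : Fin n → ℝ)
    (hpos : ∀ i, 0 < p i) (hsum : ∑ i, p i = 1)
    (Fbar : Fin n → ℝ)
    (hFbar : ∀ i, Fbar i = (∑ j ∈ Finset.univ.filter (fun j => j < i), p j) + p i / 2)
    (ℓ : Fin n → ℕ)
    (hℓ : ∀ i, (ℓ i : ℤ) = ⌈Real.logb 2 (1 / p i)⌉ + 1) :
    ∀ i j : Fin n, i ≠ j →
      ¬ (ℓ i ≤ ℓ j ∧ ∀ k : ℕ, 1 ≤ k → k ≤ ℓ i →
          ⌊Fbar i * 2 ^ k⌋ % 2 = ⌊Fbar j * 2 ^ k⌋ % 2) := by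
  intro i j hij h
  obtain ⟨hle, hbits⟩ := h
  -- bounds on Fbar
  have hF0 : ∀ t, 0 ≤ Fbar t := by
    intro t
    rw [hFbar t]
    have h1 : (0:ℝ) ≤ ∑ j ∈ Finset.univ.filter (fun j => j < t), p j :=
      Finset.sum_nonneg fun x _ => (hpos x).le
    linarith [hpos t]
  have hF1 : ∀ t, Fbar t ≤ 1 - p t / 2 := by
    intro t
    rw [hFbar t]
    have hsubset : Finset.univ.filter (fun j => j < t) ⊆ Finset.univ.erase t := by
      intro x hx
      simp only [Finset.mem_filter, Finset.mem_univ, true_and] at hx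
      exact Finset.mem_erase.2 ⟨ne_of_lt hx, Finset.mem_univ x⟩
    have h1 : ∑ j ∈ Finset.univ.filter (fun j => j < t), p j ≤ ∑ j ∈ Finset.univ.erase t, p j :=
      Finset.sum_le_sum_of_subset_of_nonneg hsubset fun x _ _ => (hpos x).le
    have h2 : p t + ∑ j ∈ Finset.univ.erase t, p j = 1 := by
      rw [Finset.add_sum_erase _ p (Finset.mem_univ t)]; exact hsum
    linarith
  have hFlt1 : ∀ t, Fbar t < 1 := fun t => lt_of_le_of_lt (hF1 t) (by linarith [hpos t])
  -- separation between distinct Fbar values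
  have gap : ∀ a b : Fin n, a < b → Fbar a + (p a + p b) / 2 ≤ Fbar b := by
    intro a b hab
    rw [hFbar a, hFbar b]
    have hsubset : insert a (Finset.univ.filter (fun j => j < a)) ⊆
        Finset.univ.filter (fun j => j < b) := by
      intro x hx
      simp only [Finset.mem_insert, Finset.mem_filter, Finset.mem_univ, true_and] at hx ⊢
      rcases hx with rfl | hx
      · exact hab
      · exact hx.trans hab
    have hnm : a ∉ Finset.univ.filter (fun j => j < a) := by simp
    have h1 := Finset.sum_le_sum_of_subset_of_nonneg hsubset
      (fun x _ _ => (hpos x).le)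
    rw [Finset.sum_insert hnm] at h1
    linarith
  -- the bits of Fbar i and Fbar j agree up to ℓ i, hence floors at scale ℓ i agree
  have hfloor : ∀ m, m ≤ ℓ i → ⌊Fbar i * 2 ^ m⌋ = ⌊Fbar j * 2 ^ m⌋ := by
    intro m
    induction m with
    | zero =>
      intro _
      simp only [pow_zero, mul_one]
      rw [Int.floor_eq_zero_iff.2 ⟨hF0 i, hFlt1 i⟩, Int.floor_eq_zero_iff.2 ⟨hF0 j, hFlt1 j⟩]
    | succ m ih =>
      intro hm
      have ihm := ih (Nat.le_of_succ_le hm)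
      have key : ∀ x : ℝ, ⌊x * 2 ^ m⌋ = ⌊x * 2 ^ (m + 1)⌋ / 2 := by
        intro x
        have hx : x * 2 ^ m = x * 2 ^ (m + 1) / 2 := by ring
        rw [hx, sfe_floor_half]
      have hb := hbits (m + 1) (Nat.succ_le_succ (Nat.zero_le m)) hm
      have hdiv : ⌊Fbar i * 2 ^ (m+1)⌋ / 2 = ⌊Fbar j * 2 ^ (m+1)⌋ / 2 := by
        rw [← key, ← key, ihm]
      omega
  -- hence |Fbar i - Fbar j| < 2⁻^(ℓ i)
  have hL := hfloor (ℓ i) le_rfl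
  set L := ℓ i with hLdef
  have hpow2 : (0:ℝ) < 2 ^ L := by positivity
  have hclose : |Fbar i - Fbar j| * 2 ^ L < 1 := by
    have h1 : (⌊Fbar i * 2 ^ L⌋ : ℝ) ≤ Fbar i * 2 ^ L := Int.floor_le _
    have h2 : Fbar i * 2 ^ L < ⌊Fbar i * 2 ^ L⌋ + 1 := Int.lt_floor_add_one _
    have h3 : (⌊Fbar j * 2 ^ L⌋ : ℝ) ≤ Fbar j * 2 ^ L := Int.floor_le _
    have h4 : Fbar j * 2 ^ L < ⌊Fbar j * 2 ^ L⌋ + 1 := Int.lt_floor_add_one _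
    have hLr : (⌊Fbar i * 2 ^ L⌋ : ℝ) = (⌊Fbar j * 2 ^ L⌋ : ℝ) := by exact_mod_cast hL
    have hexp : (Fbar i - Fbar j) * 2 ^ L = Fbar i * 2 ^ L - Fbar j * 2 ^ L := by ring
    have habs : |(Fbar i - Fbar j) * 2 ^ L| < 1 := by
      rw [abs_lt, hexp]
      constructor <;> linarith
    calc |Fbar i - Fbar j| * 2 ^ L = |(Fbar i - Fbar j) * 2 ^ L| := by
          rw [abs_mul, abs_of_pos hpow2]
      _ < 1 := habs
  -- but 2⁻^(ℓ i) ≤ p i / 2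
  have hpi : 1 ≤ p i / 2 * 2 ^ L := by
    have hcl : Real.logb 2 (1 / p i) ≤ ((L : ℤ) - 1 : ℤ) := by
      rw [hLdef, hℓ i]
      push_cast
      linarith [Int.le_ceil (Real.logb 2 (1 / p i))]
    have hp := hpos i
    have h2pos : (0:ℝ) < 1 / p i := by positivity
    have hrw : (2:ℝ) ^ (Real.logb 2 (1 / p i)) = 1 / p i :=
      Real.rpow_logb (by norm_num) (by norm_num) h2pos
    have hmono : (2:ℝ) ^ (Real.logb 2 (1 / p i)) ≤ (2:ℝ) ^ (((L : ℤ) - 1 : ℤ) : ℝ) :=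
      Real.rpow_le_rpow_of_exponent_le (by norm_num) (by exact_mod_cast hcl)
    rw [hrw] at hmono
    have hz : (2:ℝ) ^ (((L : ℤ) - 1 : ℤ) : ℝ) = 2 ^ L / 2 := by
      rw [Real.rpow_intCast]
      rw [zpow_sub₀ (by norm_num : (2:ℝ) ≠ 0)]
      norm_num
    rw [hz] at hmono
    rw [div_le_div_iff₀ (by positivity) (by norm_num)] at hmono
    nlinarith
  -- contradiction
  have habs : p i / 2 < |Fbar i - Fbar j| := by
    rcases lt_or_gt_of_ne hij with hlt | hgt
    · have hg := gap i j hlt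
      rw [abs_of_nonpos (by linarith [hpos i, hpos j] : Fbar i - Fbar j ≤ 0)]
      linarith [hpos i, hpos j]
    · have hg := gap j i hgt
      rw [abs_of_nonneg (by linarith [hpos i, hpos j] : (0:ℝ) ≤ Fbar i - Fbar j)]
      linarith [hpos i, hpos j]
  nlinarith [abs_nonneg (Fbar i - Fbar j)]
end

section
/- For i < j, the truncation of F̄(i) to ℓ_i bits and the truncation of F̄(j) to ℓ_j bits determine disjoint dyadic intervals, and the interval for i lies entirely to the left of the interval for j; in particular, ⌊F̄(i)·2^{ℓ_i}⌋/2^{ℓ_i} + 2^{-ℓ_i} ≤ ⌊F̄(j)·2^{ℓ_j}⌋/2^{ℓ_j} whenever 2^{-ℓ_i} ≤ p_i/2 and 2^{-ℓ_j} ≤ p_j/2 and F̄(j) - F̄(i) ≥ p_i/2 + p_j/2. -/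
/-- For `i < j` the dyadic intervals determined by the SFE truncations are
    disjoint, that of `i` lying entirely to the left of that of `j`. -/
theorem sfe_dyadic_intervals_disjoint (n : ℕ) (p : Fin n → ℝ)
    (hpos : ∀ i, 0 < p i) (hsum : ∑ i, p i = 1)
    (Fbar : Fin n → ℝ)
    (hFbar : ∀ i, Fbar i = (∑ j ∈ Finset.univ.filter (fun j => j < i), p j) + p i / 2)
    (ℓ : Fin n → ℕ) :
    ∀ i j : Fin n, i < j →
      (2 : ℝ) ^ (-(ℓ i : ℤ)) ≤ p i / 2 →
      (2 : ℝ) ^ (-(ℓ j : ℤ)) ≤ p j / 2 →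
      p i / 2 + p j / 2 ≤ Fbar j - Fbar i →
      (⌊Fbar i * 2 ^ ℓ i⌋ : ℝ) / 2 ^ ℓ i + (2 : ℝ) ^ (-(ℓ i : ℤ)) ≤
        (⌊Fbar j * 2 ^ ℓ j⌋ : ℝ) / 2 ^ ℓ j := by
  intro i j hij hpi hpj hgap
  have h2a : (0:ℝ) < 2 ^ ℓ i := by positivity
  have h2b : (0:ℝ) < 2 ^ ℓ j := by positivity
  have ha : (2:ℝ) ^ (-(ℓ i : ℤ)) = 1 / 2 ^ ℓ i := by
    rw [zpow_neg, zpow_natCast, one_div]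
  have hb : (2:ℝ) ^ (-(ℓ j : ℤ)) = 1 / 2 ^ ℓ j := by
    rw [zpow_neg, zpow_natCast, one_div]
  rw [ha] at hpi ⊢
  rw [hb] at hpj
  have e1 : (⌊Fbar i * 2 ^ ℓ i⌋ : ℝ) / 2 ^ ℓ i ≤ Fbar i := by
    rw [div_le_iff₀ h2a]; exact Int.floor_le _
  have h2 : Fbar j * 2 ^ ℓ j - 1 < (⌊Fbar j * 2 ^ ℓ j⌋ : ℝ) := Int.sub_one_lt_floor _
  have e2 : Fbar j - 1 / 2 ^ ℓ j < (⌊Fbar j * 2 ^ ℓ j⌋ : ℝ) / 2 ^ ℓ j := by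
    rw [lt_div_iff₀ h2b]
    have : (Fbar j - 1 / 2 ^ ℓ j) * 2 ^ ℓ j = Fbar j * 2 ^ ℓ j - 1 := by
      field_simp
    linarith
  linarith
end

section
/- Any binary tree whose leaves, read left-to-right, are the keys 1,...,n in increasing order can be converted to a binary search tree on the same keys in which the depth of each key is at most its depth in the original tree. -/
/-- Binary trees with keys at the leaves. -/
inductive BTree where
  | leaf (k : ℕ)
  | node (l r : BTree)

/-- The leaves of a binary tree, read left-to-right. -/
def BTree.leaves : BTree → List ℕ
  | .leaf k => [k]
  | .node l r => l.leaves ++ r.leaves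

/-- Depth (root has depth 1) of the leaf holding key `x`, if present. -/
def BTree.depthOf : BTree → ℕ → Option ℕ
  | .leaf k, x => if k = x then some 1 else none
  | .node l r, x => ((l.depthOf x).map (· + 1)) <|> ((r.depthOf x).map (· + 1))

/-- Binary search trees with keys at internal nodes. -/
inductive BST where
  | nil
  | node (l : BST) (k : ℕ) (r : BST)

/-- In-order key sequence of a BST. -/
def BST.inorder : BST → List ℕ
  | .nil => []
  | .node l k r => l.inorder ++ k :: r.inorder

/-- The symmetric order property. -/
def BST.isSearchTree : BST → Prop
  | .nil => True
  | .node l k r => (∀ x ∈ l.inorder, x < k) ∧ (∀ x ∈ r.inorder, k < x) ∧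
      l.isSearchTree ∧ r.isSearchTree

/-- Depth (root has depth 1) of key `x` in a BST, if present. -/
def BST.depthOf : BST → ℕ → Option ℕ
  | .nil, _ => none
  | .node l k r, x =>
      if k = x then some 1
      else ((l.depthOf x).map (· + 1)) <|> ((r.depthOf x).map (· + 1))



/-!
Label every internal node of `T` by the leftmost leaf of its right subtree. A key other than
the leftmost one is then the label of exactly one node, the last node at which its root path
turns right, and that node lies strictly above the leaf. The leftmost key stays at the end of
the leftmost path. An in-order traversal of the labelled tree reads the leaves left to right,
so sorted leaves give a search tree.
-/

namespace BTree

def firstLeaf : BTree → ℕ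
  | .leaf k => k
  | .node l _ => l.firstLeaf

/-- A search tree on all leaves of `T` except `T.firstLeaf`. -/
def tailBST : BTree → BST
  | .leaf _ => .nil
  | .node l r => .node l.tailBST r.firstLeaf r.tailBST

def toBST : BTree → BST
  | .leaf k => .node .nil k .nil
  | .node l r => .node l.toBST r.firstLeaf r.tailBST

theorem leaves_eq_firstLeaf_cons (T : BTree) :
    T.leaves = T.firstLeaf :: T.tailBST.inorder := by
  induction T with
  | leaf k => rfl
  | node l r ihl ihr => simp [leaves, firstLeaf, tailBST, BST.inorder, ihl, ihr]

theorem inorder_toBST (T : BTree) : T.toBST.inorder = T.leaves := by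
  induction T with
  | leaf k => rfl
  | node l r ihl _ => simp [leaves, toBST, BST.inorder, ihl, leaves_eq_firstLeaf_cons r]

theorem notMem_leaves_of_depthOf_eq_none {T : BTree} {x : ℕ} (h : T.depthOf x = none) :
    x ∉ T.leaves := by
  induction T with
  | leaf k =>
    simp only [depthOf, ite_eq_right_iff, reduceCtorEq, imp_false] at h
    simpa [leaves, eq_comm] using h
  | node l r ihl ihr =>
    simp only [depthOf] at h
    cases hl : l.depthOf x <;> cases hr : r.depthOf x <;> simp [hl, hr] at h
    simp [leaves, ihl hl, ihr hr]

theorem depthOf_node_eq_some {l r : BTree} {x d : ℕ} (h : (node l r).depthOf x = some d) :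
    (∃ d₁, l.depthOf x = some d₁ ∧ d = d₁ + 1) ∨
      (l.depthOf x = none ∧ ∃ d₂, r.depthOf x = some d₂ ∧ d = d₂ + 1) := by
  simp only [depthOf] at h
  cases hl : l.depthOf x <;> simp_all [eq_comm]

end BTree

theorem BST.depthOf_eq_none_of_notMem {B : BST} {x : ℕ} (h : x ∉ B.inorder) :
    B.depthOf x = none := by
  induction B with
  | nil => rfl
  | node l k r ihl ihr =>
    simp only [inorder, List.mem_append, List.mem_cons, not_or] at h
    simp [depthOf, Ne.symm h.2.1, ihl h.1, ihr h.2.2]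

theorem BST.isSearchTree_of_pairwise_lt {B : BST} (h : B.inorder.Pairwise (· < ·)) :
    B.isSearchTree := by
  induction B with
  | nil => trivial
  | node l k r ihl ihr =>
    obtain ⟨hl, hkr, hcross⟩ := List.pairwise_append.mp h
    rw [List.pairwise_cons] at hkr
    exact ⟨fun x hx => hcross x hx k List.mem_cons_self, hkr.1, ihl hl, ihr hkr.2⟩

def DepthLE (T : BTree) (B : BST) (E : Set ℕ) : Prop :=
  ∀ x ∉ E, ∀ d, T.depthOf x = some d → ∃ d' ≤ d, B.depthOf x = some d'

/-- The key `k` may be missing from `R` because it is placed at the new root. -/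
theorem DepthLE.node {l r : BTree} {L R : BST} {k : ℕ} {E : Set ℕ}
    (hl : DepthLE l L E) (hr : DepthLE r R {k}) (hL : L.inorder ⊆ l.leaves) :
    DepthLE (.node l r) (.node L k R) E := by
  intro x hxE d h
  by_cases hk : k = x
  · refine ⟨1, ?_, by simp [BST.depthOf, hk]⟩
    rcases BTree.depthOf_node_eq_some h with ⟨_, _, rfl⟩ | ⟨_, _, _, rfl⟩ <;> omega
  rcases BTree.depthOf_node_eq_some h with ⟨d₁, hd₁, rfl⟩ | ⟨hnone, d₂, hd₂, rfl⟩
  · obtain ⟨d', hd', hL'⟩ := hl x hxE d₁ hd₁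
    exact ⟨d' + 1, by omega, by simp [BST.depthOf, hk, hL']⟩
  · have hLnone : L.depthOf x = none :=
      BST.depthOf_eq_none_of_notMem fun hx =>
        BTree.notMem_leaves_of_depthOf_eq_none hnone (hL hx)
    obtain ⟨d', hd', hR'⟩ := hr x (Ne.symm hk) d₂ hd₂
    exact ⟨d' + 1, by omega, by simp [BST.depthOf, hk, hLnone, hR']⟩

namespace BTree

theorem depthLE_tailBST (T : BTree) : DepthLE T T.tailBST {T.firstLeaf} := by
  induction T with
  | leaf k =>
    intro x hx d h
    simp only [depthOf, firstLeaf, Set.mem_singleton_iff] at h hx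
    simp [Ne.symm hx] at h
  | node l r ihl ihr =>
    refine DepthLE.node ihl ihr ?_
    rw [leaves_eq_firstLeaf_cons l]
    exact List.subset_cons_self _ _

theorem depthLE_toBST (T : BTree) : DepthLE T T.toBST ∅ := by
  induction T with
  | leaf k =>
    intro x _ d h
    simp only [depthOf, ite_eq_iff, reduceCtorEq, and_false, or_false, Option.some.injEq] at h
    exact ⟨1, by omega, by simp [toBST, BST.depthOf, h.1]⟩
  | node l r ihl _ =>
    exact DepthLE.node ihl (depthLE_tailBST r) fun _ hx => inorder_toBST l ▸ hx

end BTree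

/-- Any binary tree whose leaves, left-to-right, are the keys `1, …, n` in
    increasing order can be converted to a binary search tree on the same keys
    in which no key's depth increases. -/
theorem prefixTree_to_bst (n : ℕ) (T : BTree)
    (h : T.leaves = (List.range n).map (· + 1)) :
    ∃ B : BST, B.isSearchTree ∧ B.inorder = T.leaves ∧
      ∀ k d, T.depthOf k = some d → ∃ d' ≤ d, B.depthOf k = some d' := by
  have hsorted : T.toBST.inorder.Pairwise (· < ·) := by
    rw [T.inorder_toBST, h]
    exact List.pairwise_lt_range.map _ fun _ _ hab => by omega
  exact ⟨T.toBST, BST.isSearchTree_of_pairwise_lt hsorted, T.inorder_toBST,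
    fun k => T.depthLE_toBST k (Set.notMem_empty k)⟩
end

section
/- For any positive integer w and positive real m with w ≤ m, Σ_{k=1}^{⌈log₂ w⌉} (w/2^k)·log₂(2^k·m/w) ≤ w·log₂(m/w) + 2w. -/
/-!
Since `log₂ (2^k m / w) = k + log₂ (m / w)`, the sum equals `w · ∑ (k + L) / 2^k` with
`L = log₂ (m / w) ≥ 0`, and the partial sums `∑_{k=1}^n (k + L) / 2^k = L + 2 - (n + 2 + L) / 2^n`
never exceed `L + 2`, whatever the upper limit.
-/

open Finset Real

theorem sum_Icc_add_div_two_pow (a : ℝ) (n : ℕ) :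
    ∑ k ∈ Icc 1 n, (k + a) / 2 ^ k = a + 2 - (n + 2 + a) / 2 ^ n := by
  induction n with
  | zero => simp; ring
  | succ n ih =>
    rw [sum_Icc_succ_top (Nat.le_add_left 1 n), ih]
    push_cast
    field_simp
    ring

theorem sum_Icc_add_div_two_pow_le {a : ℝ} (ha : -2 ≤ a) (n : ℕ) :
    ∑ k ∈ Icc 1 n, (k + a) / 2 ^ k ≤ a + 2 := by
  rw [sum_Icc_add_div_two_pow]
  have : 0 ≤ ((n : ℝ) + 2 + a) / 2 ^ n := by
    apply div_nonneg _ (by positivity)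
    linarith [n.cast_nonneg (α := ℝ)]
  linarith

theorem div_two_pow_mul_logb_two_pow_mul {w m : ℝ} (hw : w ≠ 0) (hm : m ≠ 0) (k : ℕ) :
    w / 2 ^ k * logb 2 (2 ^ k * m / w) = w * ((k + logb 2 (m / w)) / 2 ^ k) := by
  rw [mul_div_assoc, logb_mul (by positivity) (div_ne_zero hm hw), logb_pow, logb_self_eq_one one_lt_two]
  ring

theorem bucket_sum_bound (w : ℕ) (hw : 1 ≤ w) (m : ℝ) (hm : (w : ℝ) ≤ m) :
    ∑ k ∈ Finset.Icc 1 ⌈Real.logb 2 (w : ℝ)⌉₊,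
        ((w : ℝ) / 2 ^ k) * Real.logb 2 (2 ^ k * m / w) ≤
      (w : ℝ) * Real.logb 2 (m / w) + 2 * w := by
  have hw₀ : (0 : ℝ) < w := by exact_mod_cast hw
  have hlog : 0 ≤ logb 2 (m / w) := logb_nonneg one_lt_two ((one_le_div hw₀).2 hm)
  simp_rw [div_two_pow_mul_logb_two_pow_mul hw₀.ne' (hw₀.trans_le hm).ne', ← mul_sum]
  calc (w : ℝ) * ∑ k ∈ Icc 1 ⌈logb 2 (w : ℝ)⌉₊, (k + logb 2 (m / w)) / 2 ^ k
      ≤ w * (logb 2 (m / w) + 2) :=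
        mul_le_mul_of_nonneg_left (sum_Icc_add_div_two_pow_le (by linarith) _) hw₀.le
    _ = w * logb 2 (m / w) + 2 * w := by ring
end

section
/- Let σ be a sequence of m requests over n keys, w_i the total count of key i in σ, and w_i(t) the count of key i among the first t requests. Then Σ_{t=1}^m log₂(t/w_{σ_t}(t)) ≤ m·H(W̄) + 2m, where W̄ = (w_1/m, ..., w_n/m) and H is binary entropy. -/
/-!
Grouping the requests by key, the denominators `w_{σ_t}(t)` met by the requests for key `i` run
through `1, …, w_i`, so the loss equals `log₂ m! - ∑ᵢ log₂ wᵢ!`. Then `m! ≤ mᵐ` and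
`cᶜ ≤ eᶜ c! ≤ 4ᶜ c!` leave `m log₂ m - ∑ᵢ wᵢ log₂ wᵢ + 2m`, which is `m·H(W̄) + 2m` since `∑ᵢ wᵢ = m`.
-/

open Finset Real Nat

theorem Finset.prod_card_filter_le_eq_factorial {β : Type*} [LinearOrder β] (S : Finset β) :
    ∏ s ∈ S, #{u ∈ S | u ≤ s} = (#S)! := by
  induction S using Finset.induction_on_max with
  | empty => simp
  | insert a T hlt ih =>
    have ha : a ∉ T := fun h => (hlt a h).false
    rw [prod_insert ha, card_insert_of_notMem ha, factorial_succ, ← ih]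
    congr 1
    · rw [filter_true_of_mem fun u hu => ?_, card_insert_of_notMem ha]
      rcases mem_insert.1 hu with rfl | hu
      exacts [le_rfl, (hlt u hu).le]
    · refine prod_congr rfl fun s hs => ?_
      rw [filter_insert, if_neg (hlt s hs).not_ge]

theorem prod_card_filter_le_and_eq_eq_prod_factorial {α β : Type*} [Fintype α] [DecidableEq α]
    [Fintype β] [LinearOrder β] (σ : β → α) :
    ∏ s, #{u | u ≤ s ∧ σ u = σ s} = ∏ i, (#{u | σ u = i})! := by
  rw [← prod_fiberwise univ σ]
  refine prod_congr rfl fun i _ => ?_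
  rw [← prod_card_filter_le_eq_factorial]
  refine prod_congr rfl fun s hs => ?_
  rw [(mem_filter.1 hs).2, filter_filter]
  congr 1
  ext u
  simp [and_comm]

theorem Nat.pow_self_le_four_pow_mul_factorial (c : ℕ) : c ^ c ≤ 4 ^ c * c ! := by
  have h : (c : ℝ) ^ c / c ! ≤ 4 ^ c :=
    calc (c : ℝ) ^ c / c ! ≤ exp c := pow_div_factorial_le_exp _ c.cast_nonneg c
      _ = exp 1 ^ c := by rw [← exp_nat_mul, mul_one]
      _ ≤ 4 ^ c := by gcongr; linarith [exp_one_lt_d9]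
  rw [div_le_iff₀ (by positivity)] at h
  exact_mod_cast h

theorem Real.logb_factorial_le (m : ℕ) : logb 2 m ! ≤ m * logb 2 m := by
  rw [← logb_pow]
  exact logb_le_logb_of_le one_lt_two (by positivity) (by exact_mod_cast m.factorial_le_pow)

theorem Real.mul_logb_sub_two_mul_le_logb_factorial (c : ℕ) :
    c * logb 2 c - 2 * c ≤ logb 2 c ! := by
  have hle : (c : ℝ) ^ c ≤ (2 : ℝ) ^ (2 * c) * c ! := by
    rw [pow_mul]; exact_mod_cast c.pow_self_le_four_pow_mul_factorial
  have h := logb_le_logb_of_le one_lt_two (by exact_mod_cast Nat.pow_self_pos) hle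
  rw [logb_pow, logb_mul (by positivity) (by positivity), logb_pow, logb_self_eq_one one_lt_two]
    at h
  push_cast at h
  linarith

theorem Real.sum_logb_succ_eq_logb_factorial (b : ℝ) (m : ℕ) :
    ∑ s : Fin m, logb b ((s : ℕ) + 1 : ℝ) = logb b m ! := by
  rw [← logb_prod _ _ fun s _ => by positivity,
    Fin.prod_univ_eq_prod_range (fun k : ℕ => (k : ℝ) + 1)]
  exact_mod_cast congrArg (fun x : ℕ => logb b x) (prod_range_add_one_eq_factorial m)

theorem mul_sum_filter_div_mul_logb_div {ι : Type*} [Fintype ι] (b : ℝ) (w : ι → ℕ) {m : ℕ}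
    (hw : ∑ i, w i = m) :
    (m : ℝ) * ∑ i with 0 < w i, (w i / m : ℝ) * logb b (m / w i) =
      m * logb b m - ∑ i, w i * logb b (w i) := by
  rw [sum_filter_of_ne fun i _ h => Nat.pos_of_ne_zero fun h0 => by simp [h0] at h, mul_sum]
  calc ∑ i, (m : ℝ) * (w i / m * logb b (m / w i))
      = ∑ i, (w i * logb b m - w i * logb b (w i)) := sum_congr rfl fun i _ => by
        rcases eq_or_ne (w i) 0 with h | h
        · simp [h]
        · have hm : m ≠ 0 := (hw ▸ single_le_sum (by simp) (mem_univ i)).trans_lt' h.bot_lt |>.ne'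
          rw [logb_div (by positivity) (by positivity)]
          field_simp
    _ = m * logb b m - ∑ i, w i * logb b (w i) := by
      rw [sum_sub_distrib, ← sum_mul, ← Nat.cast_sum, hw]

/-- Request `s : Fin m` is issued at time `t = s + 1`. -/
theorem online_logloss_entropy_bound_general (n m : ℕ)
    (σ : Fin m → Fin n)
    (w : Fin n → ℕ → ℕ)
    (hw : ∀ i t, w i t = (Finset.univ.filter fun s : Fin m => (s : ℕ) < t ∧ σ s = i).card) :
    ∑ s : Fin m, Real.logb 2 (((s : ℕ) + 1 : ℝ) / (w (σ s) ((s : ℕ) + 1) : ℝ)) ≤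
      (m : ℝ) * (∑ i ∈ Finset.univ.filter fun i : Fin n => 0 < w i m,
          ((w i m : ℝ) / m) * Real.logb 2 ((m : ℝ) / (w i m : ℝ))) + 2 * m := by
  have hprefix : ∀ s : Fin m, w (σ s) ((s : ℕ) + 1) = #{u | u ≤ s ∧ σ u = σ s} := fun s => by
    simp only [hw, Nat.lt_succ_iff, Fin.val_fin_le]
  have htotal : ∀ i, w i m = #{u | σ u = i} := fun i => by simp [hw]
  have hpos : ∀ s : Fin m, (w (σ s) ((s : ℕ) + 1) : ℝ) ≠ 0 := fun s => by
    rw [hprefix]; exact_mod_cast (card_pos.2 ⟨s, by simp⟩).ne'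
  have hsum : ∑ i, w i m = m := by
    simp only [htotal, ← card_eq_sum_card_fiberwise fun u _ => mem_coe.2 (mem_univ (σ u)),
      Finset.card_univ, Fintype.card_fin]
  have hprod : ∏ s, (w (σ s) ((s : ℕ) + 1) : ℝ) = ∏ i, ((w i m)! : ℝ) := by
    simp only [hprefix, htotal]
    exact_mod_cast prod_card_filter_le_and_eq_eq_prod_factorial σ
  calc _ = logb 2 m ! - ∑ i, logb 2 (w i m)! := by
        rw [sum_congr rfl fun s _ => logb_div (by positivity) (hpos s), sum_sub_distrib,
          sum_logb_succ_eq_logb_factorial, ← logb_prod _ _ fun s _ => hpos s, hprod,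
          logb_prod _ _ fun i _ => by positivity]
    _ ≤ m * logb 2 m - ∑ i, (w i m * logb 2 (w i m) - 2 * w i m) :=
        sub_le_sub (logb_factorial_le m)
          (sum_le_sum fun i _ => mul_logb_sub_two_mul_le_logb_factorial _)
    _ = _ := by
        rw [mul_sum_filter_div_mul_logb_div 2 (w · m) hsum, sum_sub_distrib, ← mul_sum,
          ← Nat.cast_sum, hsum]
        ring

/-- Total online log-loss against empirical frequencies is at most
    `m·H(W̄) + 2m`, where request `s` occurs at time `t = s + 1`. -/
theorem online_logloss_entropy_bound (n m : ℕ) (hm : 0 < m)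
    (σ : Fin m → Fin n)
    (w : Fin n → ℕ → ℕ)
    (hw : ∀ i t, w i t = (Finset.univ.filter fun s : Fin m => (s : ℕ) < t ∧ σ s = i).card) :
    ∑ s : Fin m, Real.logb 2 (((s : ℕ) + 1 : ℝ) / (w (σ s) ((s : ℕ) + 1) : ℝ)) ≤
      (m : ℝ) * (∑ i ∈ Finset.univ.filter fun i : Fin n => 0 < w i m,
          ((w i m : ℝ) / m) * Real.logb 2 ((m : ℝ) / (w i m : ℝ))) + 2 * m :=
  online_logloss_entropy_bound_general n m σ w hw
end
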